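/- For all nonnegative integers n and parameters a, b, q: (abq;q)_n / (bq;q)_n = 1 + b(1-a) * sum_{j=1}^{n} (abq;q)_{j-1} q^j / (bq;q)_j, where (A;q)_k denotes the q-Pochhammer symbol. -/
import Mathlib


/-- `(A;q)_n` -/
noncomputable def qp {F : Type*} [Field F] (q a : F) (n : ℕ) : F :=
  ∏ k ∈ Finset.range n, (1 - a * q ^ k)

lemma qp_succ {F : Type*} [Field F] (q A : F) (n : ℕ) :
    qp q A (n + 1) = qp q A n * (1 - A * q ^ n) := by
  simp [qp, Finset.prod_range_succ]

theorem alladi_identity {F : Type*} [Field F] (q a b : F) (n : ℕ)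
    (h : ∀ j, 1 ≤ j → j ≤ n → qp q (b * q) j ≠ 0) :
    qp q (a * b * q) n / qp q (b * q) n =
      1 + b * (1 - a) * ∑ j ∈ Finset.Icc 1 n, qp q (a * b * q) (j - 1) * q ^ j / qp q (b * q) j := by
  induction n with
  | zero => simp [qp]
  | succ n ih =>
    have hn1 : qp q (b * q) (n + 1) ≠ 0 := h (n + 1) (by omega) le_rfl
    have hn : qp q (b * q) n ≠ 0 := by
      intro h0
      apply hn1
      rw [qp_succ, h0, zero_mul]
    have IH := ih (fun j hj hjn => h j hj (by omega))
    rw [Finset.sum_Icc_succ_top (by omega : 1 ≤ n + 1), mul_add, ← add_assoc, ← IH,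
      qp_succ, qp_succ]
    have hfac : 1 - b * q * q ^ n ≠ 0 := by
      intro h0
      apply hn1
      rw [qp_succ, h0, mul_zero]
    simp only [Nat.add_sub_cancel]
    rw [qp_succ] at hn1
    field_simp
    ring
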